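/- arXiv:0710.4589 — 3 statements merged into one kernel-verified Lean document; each statement's English description precedes it below -/
import Mathlib

section
/- Let X be a self-avoiding cutset of edges in Z^d separating a finite connected set B from infinity. Then for every edge e ∈ X with endpoints v₁ and v₂ (labelled appropriately), there exist paths γ₁ from v₁ to B and γ₂ from v₂ to infinity (i.e., γ₂ leaves every finite set) such that neither γ₁ nor γ₂ uses any edge of X. -/
/-!
Take `e ∈ X`. By minimality, `X \ {e}` is not a cutset, so some escaping path `γ` from `B`
uses no edge of `X` other than `e`; since `X` is a cutset it does cross `e`. Label
`e = s(v₁, v₂)` by the first crossing. In the lattice with `X` deleted, `v₁` is connected to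
`γ 0 ∈ B`, and every vertex of `γ` lies in the component of `v₁` or of `v₂`. The component of
`v₁` is finite, since otherwise it would carry an escaping path from `B` avoiding `X`; as `γ`
visits infinitely many vertices, the component of `v₂` is infinite, and concatenating walks to
ever new vertices of it gives the escaping path `γ₂`.
-/

/-- The nearest-neighbor graph on `ℤ^d`. -/
def latticeGraph (d : ℕ) : SimpleGraph (Fin d → ℤ) where
  Adj u v := (∑ i, (u i - v i).natAbs) = 1
  symm := by
    constructor
    intro u v h
    rw [Finset.sum_congr rfl (fun i _ => by rw [← Int.natAbs_neg, neg_sub] : ∀ i ∈ Finset.univ, (v i - u i).natAbs = (u i - v i).natAbs)]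
    exact h
  loopless := by constructor; intro u h; simp at h

/-- `X` cuts the set `B` from infinity: every infinite nearest-neighbor path which
starts in `B` and eventually leaves every finite set must use an edge of `X`. -/
def CutsFromInfinity (d : ℕ) (B : Set (Fin d → ℤ)) (X : Set (Sym2 (Fin d → ℤ))) : Prop :=
  ∀ γ : ℕ → (Fin d → ℤ), γ 0 ∈ B →
    (∀ n, (latticeGraph d).Adj (γ n) (γ (n + 1))) →
    (∀ S : Set (Fin d → ℤ), S.Finite → ∃ n, γ n ∉ S) →
    ∃ n, s(γ n, γ (n + 1)) ∈ X

theorem infinite_range_of_forall_finite_exists_notMem {α : Type*} {γ : ℕ → α}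
    (h : ∀ S : Set α, S.Finite → ∃ n, γ n ∉ S) : (Set.range γ).Infinite := fun hfin =>
  let ⟨n, hn⟩ := h _ hfin
  hn ⟨n, rfl⟩

namespace SimpleGraph

variable {V : Type*} {G : SimpleGraph V}

theorem reachable_of_forall_lt_adj {γ : ℕ → V} {n : ℕ}
    (h : ∀ i < n, G.Adj (γ i) (γ (i + 1))) : G.Reachable (γ 0) (γ n) := by
  induction n with
  | zero => rfl
  | succ n ih => exact (ih fun i hi => h i (by omega)).trans (h n n.lt_succ_self).reachable

namespace Walk

def concatUpTo {u : ℕ → V} (p : ∀ k, G.Walk (u k) (u (k + 1))) : ∀ k, G.Walk (u 0) (u k)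
  | 0 => nil
  | k + 1 => (concatUpTo p k).append (p k)

variable {u : ℕ → V} (p : ∀ k, G.Walk (u k) (u (k + 1)))

theorem monotone_length_concatUpTo : Monotone fun k => (concatUpTo p k).length :=
  monotone_nat_of_le_succ fun k => by simp [concatUpTo]

theorem le_length_concatUpTo (hp : ∀ k, 0 < (p k).length) (k : ℕ) :
    k ≤ (concatUpTo p k).length := by
  induction k with
  | zero => exact le_rfl
  | succ k ih => simp only [concatUpTo, length_append]; have := hp k; omega

theorem getVert_concatUpTo_of_le {k m i : ℕ} (hkm : k ≤ m) (hi : i ≤ (concatUpTo p k).length) :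
    (concatUpTo p m).getVert i = (concatUpTo p k).getVert i := by
  induction m, hkm using Nat.le_induction with
  | base => rfl
  | succ m hkm ih =>
    rw [concatUpTo, getVert_append', if_pos (hi.trans (monotone_length_concatUpTo p hkm)), ih]

end Walk

theorem exists_seq_adj_range_subset {u : ℕ → V} (hu : ∀ k, G.Reachable (u k) (u (k + 1)))
    (hne : ∀ k, u k ≠ u (k + 1)) :
    ∃ f : ℕ → V, f 0 = u 0 ∧ (∀ n, G.Adj (f n) (f (n + 1))) ∧ Set.range u ⊆ Set.range f := by
  let p : ∀ k, G.Walk (u k) (u (k + 1)) := fun k => (hu k).some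
  have hp k : 0 < (p k).length := Walk.not_nil_iff_lt_length.1 (Walk.not_nil_of_ne (hne k))
  let W := Walk.concatUpTo p
  have hW : ∀ k, k ≤ (W k).length := Walk.le_length_concatUpTo p hp
  -- the `W k` are nested prefixes of one another, so vertex `n` may be read off any long one
  refine ⟨fun n => (W (n + 1)).getVert n, Walk.getVert_zero _, fun n => ?_, ?_⟩
  · show G.Adj ((W (n + 1)).getVert n) ((W (n + 2)).getVert (n + 1))
    rw [← Walk.getVert_concatUpTo_of_le p (Nat.le_succ (n + 1)) (hW (n + 1) |>.trans' n.le_succ)]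
    exact (W (n + 2)).adj_getVert_succ (by have := hW (n + 2); omega)
  · rintro _ ⟨k, rfl⟩
    refine ⟨(W k).length, ?_⟩
    show (W ((W k).length + 1)).getVert (W k).length = u k
    rw [Walk.getVert_concatUpTo_of_le p ((hW k).trans (Nat.le_succ _)) le_rfl, Walk.getVert_length]

theorem exists_seq_adj_range_infinite {b : V} (hb : {v | G.Reachable b v}.Infinite) :
    ∃ f : ℕ → V, f 0 = b ∧ (∀ n, G.Adj (f n) (f (n + 1))) ∧ (Set.range f).Infinite := by
  let w := (hb.sdiff (Set.finite_singleton b)).natEmbedding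
  let u : ℕ → V := fun k => k.casesOn b fun j => (w j : V)
  have hw j : G.Reachable b (w j) ∧ (w j : V) ≠ b := (w j).2
  have hu : Function.Injective u := by
    rintro (_ | i) (_ | j) h
    · rfl
    · exact ((hw j).2 h.symm).elim
    · exact ((hw i).2 h).elim
    · exact congrArg (· + 1) (w.injective (Subtype.ext h))
  have hreach k : G.Reachable b (u k) := by cases k <;> simp [u, hw]
  obtain ⟨f, hf0, hadj, hrange⟩ := exists_seq_adj_range_subset
    (fun k => (hreach k).symm.trans (hreach (k + 1))) (fun k => hu.ne k.succ_ne_self.symm)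
  exact ⟨f, hf0, hadj, (Set.infinite_range_of_injective hu).mono hrange⟩

variable {X : Set (Sym2 V)}

theorem exists_walk_edges_notMem_of_reachable_deleteEdges {u v : V}
    (h : (G.deleteEdges X).Reachable u v) : ∃ p : G.Walk u v, ∀ e ∈ p.edges, e ∉ X := by
  obtain ⟨p⟩ := h
  have hedges : ∀ e ∈ p.edges, e ∈ G.edgeSet \ X := fun e he =>
    edgeSet_deleteEdges (G := G) X ▸ p.edges_subset_edgeSet he
  exact ⟨p.transfer G fun e he => (hedges e he).1,
    fun e he => (hedges e (p.edges_transfer _ ▸ he)).2⟩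

theorem exists_escaping_seq_of_infinite_reachable_deleteEdges {v : V}
    (h : {w | (G.deleteEdges X).Reachable v w}.Infinite) :
    ∃ γ : ℕ → V, γ 0 = v ∧ (∀ n, G.Adj (γ n) (γ (n + 1))) ∧
      (∀ S : Set V, S.Finite → ∃ n, γ n ∉ S) ∧ ∀ n, s(γ n, γ (n + 1)) ∉ X := by
  obtain ⟨γ, hγ0, hadj, hinf⟩ := exists_seq_adj_range_infinite h
  have hadj' n := (deleteEdges_adj ..).1 (hadj n)
  refine ⟨γ, hγ0, fun n => (hadj' n).1, fun S hS => ?_, fun n => (hadj' n).2⟩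
  obtain ⟨_, ⟨n, rfl⟩, hn⟩ := hinf.exists_notMem_finite hS
  exact ⟨n, hn⟩

theorem reachable_or_reachable_of_forall_mem_eq {γ : ℕ → V} {a b : V}
    (hadj : ∀ n, G.Adj (γ n) (γ (n + 1)))
    (hX : ∀ n, s(γ n, γ (n + 1)) ∈ X → s(γ n, γ (n + 1)) = s(a, b))
    (h0 : (G.deleteEdges X).Reachable a (γ 0)) (m : ℕ) :
    (G.deleteEdges X).Reachable a (γ m) ∨ (G.deleteEdges X).Reachable b (γ m) := by
  induction m with
  | zero => exact .inl h0
  | succ m ih =>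
    by_cases hm : s(γ m, γ (m + 1)) ∈ X
    · rcases Sym2.eq_iff.1 (hX m hm) with ⟨-, h⟩ | ⟨-, h⟩
      · exact .inr (h ▸ .rfl)
      · exact .inl (h ▸ .rfl)
    · have hstep : (G.deleteEdges X).Reachable (γ m) (γ (m + 1)) :=
        ((deleteEdges_adj ..).2 ⟨hadj m, hm⟩).reachable
      exact ih.imp (·.trans hstep) (·.trans hstep)

end SimpleGraph

open SimpleGraph

theorem not_cutsFromInfinity_of_infinite_reachable {d : ℕ} {B : Set (Fin d → ℤ)}
    {X : Set (Sym2 (Fin d → ℤ))} {a b : Fin d → ℤ} (hb : b ∈ B)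
    (hab : ((latticeGraph d).deleteEdges X).Reachable a b)
    (h : {w | ((latticeGraph d).deleteEdges X).Reachable a w}.Infinite) :
    ¬ CutsFromInfinity d B X := by
  rw [show {w | ((latticeGraph d).deleteEdges X).Reachable a w} = _ from
    Set.ext fun w => ⟨hab.symm.trans, hab.trans⟩] at h
  intro hcut
  obtain ⟨γ, hγ0, hadj, hesc, havoid⟩ := exists_escaping_seq_of_infinite_reachable_deleteEdges h
  obtain ⟨n, hn⟩ := hcut γ (hγ0 ▸ hb) hadj hesc
  exact havoid n hn

theorem self_avoiding_cutset_edge_paths_general (d : ℕ) (B : Set (Fin d → ℤ))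
    (X : Set (Sym2 (Fin d → ℤ)))
    (hcut : CutsFromInfinity d B X)
    (hmin : ∀ e ∈ X, ¬ CutsFromInfinity d B (X \ {e})) :
    ∀ e ∈ X, ∃ v₁ v₂ : Fin d → ℤ, e = s(v₁, v₂) ∧
      (∃ b ∈ B, ∃ γ₁ : (latticeGraph d).Walk v₁ b, ∀ e' ∈ γ₁.edges, e' ∉ X) ∧
      (∃ γ₂ : ℕ → (Fin d → ℤ), γ₂ 0 = v₂ ∧
        (∀ n, (latticeGraph d).Adj (γ₂ n) (γ₂ (n + 1))) ∧
        (∀ S : Set (Fin d → ℤ), S.Finite → ∃ n, γ₂ n ∉ S) ∧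
        ∀ n, s(γ₂ n, γ₂ (n + 1)) ∉ X) := by
  classical
  intro e he
  obtain ⟨γ, hγB, hγadj, hγesc, hγe⟩ : ∃ γ : ℕ → (Fin d → ℤ), γ 0 ∈ B ∧
      (∀ n, (latticeGraph d).Adj (γ n) (γ (n + 1))) ∧
      (∀ S : Set (Fin d → ℤ), S.Finite → ∃ n, γ n ∉ S) ∧
      ∀ n, s(γ n, γ (n + 1)) ∈ X → s(γ n, γ (n + 1)) = e := by
    simpa [CutsFromInfinity] using hmin e he
  have hcross := hcut γ hγB hγadj hγesc
  set n₀ := Nat.find hcross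
  have he₀ : e = s(γ n₀, γ (n₀ + 1)) := (hγe n₀ (Nat.find_spec hcross)).symm
  have hstart : ((latticeGraph d).deleteEdges X).Reachable (γ n₀) (γ 0) :=
    (reachable_of_forall_lt_adj fun i hi =>
      (deleteEdges_adj ..).2 ⟨hγadj i, Nat.find_min hcross hi⟩).symm
  have hcover := reachable_or_reachable_of_forall_mem_eq hγadj (he₀ ▸ hγe) hstart
  have hinf : {w | ((latticeGraph d).deleteEdges X).Reachable (γ (n₀ + 1)) w}.Infinite :=
    (Set.infinite_union.1 ((infinite_range_of_forall_finite_exists_notMem hγesc).mono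
      (Set.range_subset_iff.2 hcover))).resolve_left
      fun h => not_cutsFromInfinity_of_infinite_reachable hγB hstart h hcut
  obtain ⟨γ₁, hγ₁⟩ := exists_walk_edges_notMem_of_reachable_deleteEdges hstart
  exact ⟨γ n₀, γ (n₀ + 1), he₀, ⟨γ 0, hγB, γ₁, hγ₁⟩,
    exists_escaping_seq_of_infinite_reachable_deleteEdges hinf⟩

/-- if `X` is a self-avoiding (minimal) cutset of edges separating a finite
connected set `B ⊂ ℤ^d` from infinity, then for every edge `e ∈ X` with endpoints
`v₁, v₂` (suitably labelled) there are a path `γ₁` from `v₁` to `B` and an infinite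
path `γ₂` from `v₂` escaping every finite set, neither of which uses any edge of `X`. -/
theorem self_avoiding_cutset_edge_paths (d : ℕ) (B : Set (Fin d → ℤ))
    (hBfin : B.Finite)
    (hBconn : ∀ x ∈ B, ∀ y ∈ B, ∃ p : (latticeGraph d).Walk x y,
      ∀ z ∈ p.support, z ∈ B)
    (X : Set (Sym2 (Fin d → ℤ)))
    (hX : ∀ e ∈ X, e ∈ (latticeGraph d).edgeSet)
    (hcut : CutsFromInfinity d B X)
    (hmin : ∀ e ∈ X, ¬ CutsFromInfinity d B (X \ {e})) :
    ∀ e ∈ X, ∃ v₁ v₂ : Fin d → ℤ, e = s(v₁, v₂) ∧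
      (∃ b ∈ B, ∃ γ₁ : (latticeGraph d).Walk v₁ b, ∀ e' ∈ γ₁.edges, e' ∉ X) ∧
      (∃ γ₂ : ℕ → (Fin d → ℤ), γ₂ 0 = v₂ ∧
        (∀ n, (latticeGraph d).Adj (γ₂ n) (γ₂ (n + 1))) ∧
        (∀ S : Set (Fin d → ℤ), S.Finite → ∃ n, γ₂ n ∉ S) ∧
        ∀ n, s(γ₂ n, γ₂ (n + 1)) ∉ X) :=
  self_avoiding_cutset_edge_paths_general d B X hcut hmin
end

section
/- Let ω be an assignment of labels 'open' or 'closed' to the edges of Z^d, and let B be a finite connected subgraph all of whose edges are open. Let C be the open cluster of B (all vertices joined to B by open paths), and suppose C is finite. Then the set Δ_e C of exterior boundary edges of C—edges e not in C, adjacent to C, whose far endpoint has a path to infinity avoiding all vertices of C—consists entirely of closed edges and is a cutset separating B from infinity: every infinite path from B uses an edge of Δ_e C. -/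
/-- The open cluster of a set `B`: vertices joined to `B` by a walk all of whose
edges are open (`ω e` holds). -/
def openCluster (d : ℕ) (ω : Sym2 (Fin d → ℤ) → Prop) (B : Set (Fin d → ℤ)) :
    Set (Fin d → ℤ) :=
  {v | ∃ b ∈ B, ∃ p : (latticeGraph d).Walk b v, ∀ e ∈ p.edges, ω e}

/-- The exterior boundary edges of the open cluster `C` of `B`: edges `s(a,b)` of the
lattice with `a ∈ C`, `b ∉ C`, whose far endpoint `b` admits an infinite path to
infinity avoiding all vertices of `C`. -/
def extBoundaryEdges (d : ℕ) (C : Set (Fin d → ℤ)) : Set (Sym2 (Fin d → ℤ)) :=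
  {e | ∃ a b : Fin d → ℤ, e = s(a, b) ∧ (latticeGraph d).Adj a b ∧ a ∈ C ∧ b ∉ C ∧
    ∃ γ : ℕ → (Fin d → ℤ), γ 0 = b ∧
      (∀ n, (latticeGraph d).Adj (γ n) (γ (n + 1))) ∧
      (∀ S : Set (Fin d → ℤ), S.Finite → ∃ n, γ n ∉ S) ∧
      ∀ n, γ n ∉ C}

/-!
An open boundary edge of the cluster would enlarge the cluster, so boundary edges are closed.
For the cutset property, the exit edges of a path from `B` out of the finite cluster `C` end at
finitely many neighbours of `C`. If the components of `ℤ^d \ C` at all these endpoints were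
finite, together with `C` they would form a finite set that the path, once started in `C`, never
leaves. So if the path leaves every finite set, one exit edge ends in an infinite component.
Concatenating walks to infinitely many distinct vertices of that component gives a path to
infinity avoiding `C`, so the exit edge is an exterior boundary edge.
-/

open SimpleGraph Set

namespace SimpleGraph

variable {V : Type*} {G : SimpleGraph V}

/-- Need not tend to infinity: the path may return to a finite set infinitely often. -/
def IsEscapingPath (G : SimpleGraph V) (γ : ℕ → V) : Prop :=
  (∀ n, G.Adj (γ n) (γ (n + 1))) ∧ ∀ S : Set V, S.Finite → ∃ n, γ n ∉ S

def Walk.concatSeq {x : ℕ → V} (w : ∀ k, G.Walk (x k) (x (k + 1))) :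
    ∀ k, G.Walk (x 0) (x k)
  | 0 => .nil
  | k + 1 => (concatSeq w k).append (w k)

namespace Walk

variable {x : ℕ → V} (w : ∀ k, G.Walk (x k) (x (k + 1)))

lemma monotone_length_concatSeq : Monotone fun k => (concatSeq w k).length :=
  monotone_nat_of_le_succ fun k => by simp [concatSeq]

lemma le_length_concatSeq (hw : ∀ k, 0 < (w k).length) (k : ℕ) :
    k ≤ (concatSeq w k).length := by
  induction k with
  | zero => exact Nat.zero_le _
  | succ k ih => simp only [concatSeq, length_append]; have := hw k; omega

lemma getVert_concatSeq_of_le {j j' i : ℕ} (hj : j ≤ j') (hi : i ≤ (concatSeq w j).length) :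
    (concatSeq w j').getVert i = (concatSeq w j).getVert i := by
  induction j', hj using Nat.le_induction with
  | base => rfl
  | succ j' hjj' ih =>
    rw [concatSeq, getVert_append', if_pos (hi.trans (monotone_length_concatSeq w hjj')), ih]

end Walk

/-- `δ n` is read off any long enough finite concatenation of walks `x k ⟶ x (k + 1)`. -/
lemma exists_isEscapingPath_of_reachable {x : ℕ → V} (hx : Function.Injective x)
    (hreach : ∀ k, G.Reachable (x k) (x (k + 1))) :
    ∃ δ : ℕ → V, δ 0 = x 0 ∧ G.IsEscapingPath δ := by
  let w k : G.Walk (x k) (x (k + 1)) := (hreach k).some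
  have hw k : 0 < (w k).length :=
    Nat.pos_of_ne_zero fun h => Nat.succ_ne_self k (hx (Walk.eq_of_length_eq_zero h)).symm
  have hlen := Walk.le_length_concatSeq w hw
  have hstable {n j} (hj : n + 1 ≤ j) :
      (Walk.concatSeq w j).getVert n = (Walk.concatSeq w (n + 1)).getVert n :=
    Walk.getVert_concatSeq_of_le w hj (by have := hlen (n + 1); omega)
  refine ⟨fun n => (Walk.concatSeq w (n + 1)).getVert n, Walk.getVert_zero _, fun n => ?_,
    fun S hS => ?_⟩
  · beta_reduce
    rw [← hstable (n := n) (j := n + 2) (by omega)]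
    exact Walk.adj_getVert_succ _ (by have := hlen (n + 2); omega)
  · obtain ⟨k, hk⟩ : ∃ k, x k ∉ S := by
      by_contra! h
      exact infinite_range_of_injective hx (hS.subset (range_subset_iff.mpr h))
    refine ⟨(Walk.concatSeq w k).length, ?_⟩
    beta_reduce
    rwa [Walk.getVert_concatSeq_of_le w (by have := hlen k; omega) le_rfl, Walk.getVert_length]

lemma exists_isEscapingPath_of_infinite {b : V} (h : (G.connectedComponentMk b).supp.Infinite) :
    ∃ δ : ℕ → V, δ 0 = b ∧ G.IsEscapingPath δ := by
  let e := (h.sdiff (finite_singleton b)).natEmbedding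
  let x : ℕ → V
    | 0 => b
    | k + 1 => e k
  have hx : Function.Injective x := by
    have he k : (e k : V) ≠ b := (e k).2.2
    rintro (_ | i) (_ | j) hij
    exacts [rfl, (he j hij.symm).elim, (he i hij).elim,
      congrArg (· + 1) (e.injective (Subtype.ext hij))]
  have hreach k : G.Reachable b (x k) := by
    cases k with
    | zero => rfl
    | succ k => exact (ConnectedComponent.eq.mp (e k).2.1).symm
  exact exists_isEscapingPath_of_reachable hx fun k => (hreach k).symm.trans (hreach (k + 1))

lemma IsEscapingPath.coe_induce {s : Set V} {δ : ℕ → s} (h : (G.induce s).IsEscapingPath δ) :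
    G.IsEscapingPath fun n => (δ n : V) :=
  ⟨h.1, fun _ hS => h.2 _ (hS.preimage Subtype.val_injective.injOn)⟩

lemma exists_exit_reachable_induce_compl {C : Set V} {γ : ℕ → V}
    (hγ : ∀ n, G.Adj (γ n) (γ (n + 1))) (h0 : γ 0 ∈ C) {N : ℕ} (hN : γ N ∉ C) :
    ∃ m < N, γ m ∈ C ∧ ∃ h : γ (m + 1) ∉ C,
      (G.induce Cᶜ).Reachable ⟨γ (m + 1), h⟩ ⟨γ N, hN⟩ := by
  induction N with
  | zero => exact (hN h0).elim
  | succ N ih =>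
    by_cases hNC : γ N ∈ C
    · exact ⟨N, N.lt_succ_self, hNC, hN, .rfl⟩
    · obtain ⟨m, hmN, hm, hm1, hreach⟩ := ih hNC
      exact ⟨m, by omega, hm, hm1, hreach.trans (Adj.reachable (hγ N))⟩

lemma IsEscapingPath.exists_exit_infinite_component (hG : ∀ v, (G.neighborSet v).Finite)
    {C : Set V} (hC : C.Finite) {γ : ℕ → V} (hγ : G.IsEscapingPath γ) (h0 : γ 0 ∈ C) :
    ∃ n, γ n ∈ C ∧ ∃ h : γ (n + 1) ∉ C,
      ((G.induce Cᶜ).connectedComponentMk ⟨γ (n + 1), h⟩).supp.Infinite := by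
  by_contra! hfin
  let F : Set (Cᶜ : Set V) := {u | ∃ n, γ n ∈ C ∧ γ (n + 1) = u}
  have hF : F.Finite :=
    ((hC.biUnion fun a _ => hG a).preimage Subtype.val_injective.injOn).subset
      fun u ⟨n, hn, hu⟩ => mem_biUnion hn (hu ▸ hγ.1 n)
  let S := C ∪ ⋃ u ∈ F, Subtype.val '' ((G.induce Cᶜ).connectedComponentMk u).supp
  have hS : S.Finite := by
    refine hC.union (hF.biUnion ?_)
    rintro ⟨u, hu⟩ ⟨n, hn, rfl⟩
    exact (hfin n hn hu).image _
  obtain ⟨N, hN⟩ := hγ.2 S hS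
  have hNC : γ N ∉ C := fun h => hN (Or.inl h)
  obtain ⟨m, -, hm, hm1, hreach⟩ := exists_exit_reachable_induce_compl hγ.1 h0 hNC
  exact hN (Or.inr (mem_biUnion (x := ⟨γ (m + 1), hm1⟩) ⟨m, hm, rfl⟩
    ⟨⟨γ N, hNC⟩, ConnectedComponent.eq.mpr hreach.symm, rfl⟩))

end SimpleGraph

lemma latticeGraph_neighborSet_finite {d : ℕ} (a : Fin d → ℤ) :
    ((latticeGraph d).neighborSet a).Finite := by
  refine (Set.Finite.pi fun i => finite_Icc (a i - 1) (a i + 1)).subset fun v hv i _ => ?_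
  have : (a i - v i).natAbs ≤ 1 :=
    (Finset.single_le_sum (fun j _ => Nat.zero_le _) (Finset.mem_univ i)).trans_eq hv
  constructor <;> omega

section openCluster

variable {d : ℕ} {ω : Sym2 (Fin d → ℤ) → Prop} {B : Set (Fin d → ℤ)}

lemma subset_openCluster : B ⊆ openCluster d ω B :=
  fun b hb => ⟨b, hb, .nil, by simp⟩

lemma mem_openCluster_of_adj {a b : Fin d → ℤ} (ha : a ∈ openCluster d ω B)
    (hab : (latticeGraph d).Adj a b) (hω : ω s(a, b)) : b ∈ openCluster d ω B := by
  obtain ⟨c, hc, p, hp⟩ := ha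
  refine ⟨c, hc, p.concat hab, fun e he => ?_⟩
  rw [Walk.edges_concat, List.concat_eq_append, List.mem_append, List.mem_singleton] at he
  rcases he with he | rfl
  exacts [hp e he, hω]

end openCluster

theorem exterior_boundary_is_closed_cutset_general (d : ℕ)
    (ω : Sym2 (Fin d → ℤ) → Prop) (B : Set (Fin d → ℤ))
    (hCfin : (openCluster d ω B).Finite) :
    (∀ e ∈ extBoundaryEdges d (openCluster d ω B), ¬ ω e) ∧
    (∀ γ : ℕ → (Fin d → ℤ), γ 0 ∈ B →
      (∀ n, (latticeGraph d).Adj (γ n) (γ (n + 1))) →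
      (∀ S : Set (Fin d → ℤ), S.Finite → ∃ n, γ n ∉ S) →
      ∃ n, s(γ n, γ (n + 1)) ∈ extBoundaryEdges d (openCluster d ω B)) := by
  refine ⟨?_, fun γ hγ0 hadj hesc => ?_⟩
  · rintro _ ⟨a, b, rfl, hab, ha, hb, -⟩ hω
    exact hb (mem_openCluster_of_adj ha hab hω)
  · obtain ⟨n, hn, hn1, hinf⟩ := IsEscapingPath.exists_exit_infinite_component
      latticeGraph_neighborSet_finite hCfin ⟨hadj, hesc⟩ (subset_openCluster hγ0)
    obtain ⟨δ, hδ0, hδ⟩ := exists_isEscapingPath_of_infinite hinf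
    exact ⟨n, γ n, γ (n + 1), rfl, hadj n, hn, hn1, fun k => δ k, congrArg Subtype.val hδ0,
      hδ.coe_induce.1, hδ.coe_induce.2, fun k => (δ k).2⟩

/-- if `B` is a finite connected subgraph of `ℤ^d` all of whose edges are
open and its open cluster `C` is finite, then every exterior boundary edge of `C` is
closed, and the exterior boundary edges cut `B` from infinity: every infinite path
starting in `B` and leaving every finite set uses an exterior boundary edge of `C`. -/
theorem exterior_boundary_is_closed_cutset (d : ℕ)
    (ω : Sym2 (Fin d → ℤ) → Prop) (B : Set (Fin d → ℤ))
    (hBfin : B.Finite)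
    (hBconn : ∀ x ∈ B, ∀ y ∈ B, ∃ p : (latticeGraph d).Walk x y,
      (∀ z ∈ p.support, z ∈ B) ∧ ∀ e ∈ p.edges, ω e)
    (hBopen : ∀ u ∈ B, ∀ v ∈ B, (latticeGraph d).Adj u v → ω s(u, v))
    (hCfin : (openCluster d ω B).Finite) :
    (∀ e ∈ extBoundaryEdges d (openCluster d ω B), ¬ ω e) ∧
    (∀ γ : ℕ → (Fin d → ℤ), γ 0 ∈ B →
      (∀ n, (latticeGraph d).Adj (γ n) (γ (n + 1))) →
      (∀ S : Set (Fin d → ℤ), S.Finite → ∃ n, γ n ∉ S) →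
      ∃ n, s(γ n, γ (n + 1)) ∈ extBoundaryEdges d (openCluster d ω B)) :=
  exterior_boundary_is_closed_cutset_general d ω B hCfin
end

section
/- Let W and W' be F_0–F_m cutsets in the adjacent boxes B = [0,k_1]×∏_{i=2}^{d−1}[0,k_i]×[0,m] and B' = [k_1+1, 2k_1+1]×∏_{i=2}^{d−1}[0,k_i]×[0,m], respectively. Suppose the exits of the upper tunnels of W on the hyperplane {x_1 = k_1} and of W' on {x_1 = k_1+1} correspond exactly under the shift by one unit in the first coordinate, and likewise for the exits of the lower tunnels. Then W ∪ W' is a cutset separating the bottom face from the top face of the union box B ∪ B' = [0, 2k_1+1]×∏_{i=2}^{d−1}[0,k_i]×[0,m]. -/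
/-- Vertices of the lattice `ℤ^d` with `d = n + 1`, written as a pair of the first
`n` coordinates `(x_1, …, x_{d-1})` and the last (vertical) coordinate `x_d`. -/
abbrev LV (n : ℕ) : Type := (Fin n → ℤ) × ℤ

/-- The nearest-neighbor graph on `ℤ^{n+1}`. -/
def pGraph (n : ℕ) : SimpleGraph (LV n) where
  Adj p q := (∑ i, (p.1 i - q.1 i).natAbs) + (p.2 - q.2).natAbs = 1
  symm := by
    constructor
    intro p q h
    rw [Finset.sum_congr rfl (fun i _ => by rw [← Int.natAbs_neg, neg_sub] :
      ∀ i ∈ Finset.univ, (q.1 i - p.1 i).natAbs = (p.1 i - q.1 i).natAbs),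
      show (q.2 - p.2).natAbs = (p.2 - q.2).natAbs by rw [← Int.natAbs_neg, neg_sub]]
    exact h
  loopless := by constructor; intro p h; simp at h

/-- The box `B(k, m) = ∏_{i=1}^{d-1} [0, k_i] × [0, m]`. -/
def latBox (n : ℕ) (k : Fin n → ℕ) (m : ℕ) : Set (LV n) :=
  {p | (∀ i, 0 ≤ p.1 i ∧ p.1 i ≤ (k i : ℤ)) ∧ 0 ≤ p.2 ∧ p.2 ≤ (m : ℤ)}

/-- The bottom face `F_0` of the box `B(k, m)` (last coordinate `0`). -/
def bottomFace (n : ℕ) (k : Fin n → ℕ) (m : ℕ) : Set (LV n) :=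
  {p | p ∈ latBox n k m ∧ p.2 = 0}

/-- The top face `F_m` of the box `B(k, m)` (last coordinate `m`). -/
def topFace (n : ℕ) (k : Fin n → ℕ) (m : ℕ) : Set (LV n) :=
  {p | p ∈ latBox n k m ∧ p.2 = (m : ℤ)}

/-- `W` is an `F_0`–`F_m` cutset of the box `B(k, m)`: every lattice walk inside the
box from the bottom face to the top face uses an edge of `W`. -/
def IsBoxCutset (n : ℕ) (k : Fin n → ℕ) (m : ℕ) (W : Set (Sym2 (LV n))) : Prop :=
  ∀ u ∈ bottomFace n k m, ∀ v ∈ topFace n k m, ∀ p : (pGraph n).Walk u v,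
    (∀ x ∈ p.support, x ∈ latBox n k m) → ∃ e ∈ p.edges, e ∈ W

/-- `W` is a cutset of the vertex set `S` separating the faces `F0` and `Fm`:
every walk inside `S` from `F0` to `Fm` uses an edge of `W`. -/
def IsSetCutset (n : ℕ) (S F0 Fm : Set (LV n)) (W : Set (Sym2 (LV n))) : Prop :=
  ∀ u ∈ F0, ∀ v ∈ Fm, ∀ p : (pGraph n).Walk u v,
    (∀ x ∈ p.support, x ∈ S) → ∃ e ∈ p.edges, e ∈ W

/-- The face of the vertex set `S` at vertical level `c`. -/
def faceAt (n : ℕ) (S : Set (LV n)) (c : ℤ) : Set (LV n) := {p ∈ S | p.2 = c}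

/-- The set of exits of upper tunnels of the cutset `W` of the box `S` (with top face
at level `m`) on the hyperplane `{x_1 = c}` (the first coordinate being `i0`):
vertices of `S` on the hyperplane joined to the top face by a walk in `S` avoiding
every edge of `W`. -/
def upperExits (n : ℕ) (i0 : Fin n) (S : Set (LV n)) (m : ℕ)
    (W : Set (Sym2 (LV n))) (c : ℤ) : Set (LV n) :=
  {v | v ∈ S ∧ v.1 i0 = c ∧ ∃ w ∈ faceAt n S (m : ℤ), ∃ p : (pGraph n).Walk v w,
    (∀ x ∈ p.support, x ∈ S) ∧ ∀ e ∈ p.edges, e ∉ W}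

/-- The set of exits of lower tunnels of the cutset `W` of the box `S` on the
hyperplane `{x_1 = c}`: vertices of `S` on the hyperplane joined to the bottom face
by a walk in `S` avoiding every edge of `W`. -/
def lowerExits (n : ℕ) (i0 : Fin n) (S : Set (LV n))
    (W : Set (Sym2 (LV n))) (c : ℤ) : Set (LV n) :=
  {v | v ∈ S ∧ v.1 i0 = c ∧ ∃ w ∈ faceAt n S 0, ∃ p : (pGraph n).Walk v w,
    (∀ x ∈ p.support, x ∈ S) ∧ ∀ e ∈ p.edges, e ∉ W}

/-- The shift by one unit in the first coordinate `i0`. -/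
def shiftOne (n : ℕ) (i0 : Fin n) (p : LV n) : LV n :=
  (fun i => if i = i0 then p.1 i + 1 else p.1 i, p.2)

/-- The adjacent box `B' = [k_1 + 1, 2k_1 + 1] × ∏_{i=2}^{d-1} [0, k_i] × [0, m]`. -/
def latBox' (n : ℕ) (i0 : Fin n) (k : Fin n → ℕ) (m : ℕ) : Set (LV n) :=
  {p | ((k i0 : ℤ) + 1 ≤ p.1 i0 ∧ p.1 i0 ≤ 2 * (k i0 : ℤ) + 1) ∧
    (∀ i, i ≠ i0 → 0 ≤ p.1 i ∧ p.1 i ≤ (k i : ℤ)) ∧ 0 ≤ p.2 ∧ p.2 ≤ (m : ℤ)}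

/-- The union box `B ∪ B' = [0, 2k_1 + 1] × ∏_{i=2}^{d-1} [0, k_i] × [0, m]`. -/
def latBoxUnion (n : ℕ) (i0 : Fin n) (k : Fin n → ℕ) (m : ℕ) : Set (LV n) :=
  {p | (0 ≤ p.1 i0 ∧ p.1 i0 ≤ 2 * (k i0 : ℤ) + 1) ∧
    (∀ i, i ≠ i0 → 0 ≤ p.1 i ∧ p.1 i ≤ (k i : ℤ)) ∧ 0 ≤ p.2 ∧ p.2 ≤ (m : ℤ)}

/-! Every vertex joined, without crossing `W ∪ W'` inside `B ∪ B'`, to the bottom face lies in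
a lower tunnel of `W` in `B` or of `W'` in `B'`: a step inside one box extends the tunnel, and a
step through the interface `{x_1 = k_1} → {x_1 = k_1 + 1}` (or back) passes from an exit of a
lower tunnel on one side to an exit of a lower tunnel on the other, by the matching of lower
exits. Since `W` and `W'` are cutsets, no lower tunnel reaches the top face. -/

section Graph

variable {V : Type*} (G : SimpleGraph V) (S : Set V) (F : Set (Sym2 V))

def JoinedAvoiding (x y : V) : Prop :=
  ∃ p : G.Walk x y, (∀ z ∈ p.support, z ∈ S) ∧ ∀ e ∈ p.edges, e ∉ F

def StepClosed (L : Set V) : Prop :=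
  ∀ ⦃u v⦄, u ∈ S → v ∈ S → G.Adj u v → s(u, v) ∉ F → u ∈ L → v ∈ L

variable {G S F}

theorem JoinedAvoiding.refl {x : V} (hx : x ∈ S) : JoinedAvoiding G S F x x :=
  ⟨.nil, by simpa using hx, by simp⟩

theorem JoinedAvoiding.symm {x y : V} (h : JoinedAvoiding G S F x y) :
    JoinedAvoiding G S F y x := by
  obtain ⟨p, hS, hF⟩ := h
  exact ⟨p.reverse, by simpa using hS, by simpa using hF⟩

theorem JoinedAvoiding.cons {u v w : V} (hadj : G.Adj v u) (hv : v ∈ S) (he : s(v, u) ∉ F)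
    (h : JoinedAvoiding G S F u w) : JoinedAvoiding G S F v w := by
  obtain ⟨p, hS, hF⟩ := h
  refine ⟨.cons hadj p, ?_, ?_⟩
  · simpa [hv] using hS
  · simpa [he] using hF

theorem JoinedAvoiding.mem_of_stepClosed {L : Set V} (hL : StepClosed G S F L) {x y : V}
    (h : JoinedAvoiding G S F x y) (hx : x ∈ L) : y ∈ L := by
  obtain ⟨p, hS, hF⟩ := h
  induction p with
  | nil => exact hx
  | cons hadj p ih =>
    simp only [SimpleGraph.Walk.support_cons, List.mem_cons, SimpleGraph.Walk.edges_cons,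
      forall_eq_or_imp] at hS hF
    exact ih (hL hS.1 (hS.2 _ p.start_mem_support) hadj hF.1 hx) hS.2 hF.2

end Graph

section Lattice

variable {n : ℕ}

theorem isSetCutset_iff {S F0 Fm : Set (LV n)} {W : Set (Sym2 (LV n))} :
    IsSetCutset n S F0 Fm W ↔ ∀ u ∈ F0, ∀ v ∈ Fm, ¬ JoinedAvoiding (pGraph n) S W u v := by
  refine ⟨fun h u hu v hv ⟨p, hS, hF⟩ => ?_, fun h u hu v hv p hS => ?_⟩
  · obtain ⟨e, he, heW⟩ := h u hu v hv p hS
    exact hF e he heW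
  · by_contra! hF
    exact h u hu v hv ⟨p, hS, hF⟩

def lowerTunnelSet (S : Set (LV n)) (W : Set (Sym2 (LV n))) : Set (LV n) :=
  {x | ∃ w ∈ faceAt n S 0, JoinedAvoiding (pGraph n) S W x w}

section LowerTunnels

variable {S : Set (LV n)} {W : Set (Sym2 (LV n))}

theorem mem_of_mem_lowerTunnelSet {x : LV n} (hx : x ∈ lowerTunnelSet S W) : x ∈ S := by
  obtain ⟨_, _, p, hS, _⟩ := hx
  exact hS x p.start_mem_support

theorem mem_lowerTunnelSet_of_mem_faceAt {x : LV n} (hx : x ∈ faceAt n S 0) :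
    x ∈ lowerTunnelSet S W :=
  ⟨x, hx, .refl hx.1⟩

theorem lowerTunnelSet_step {u v : LV n} (hu : u ∈ lowerTunnelSet S W) (hv : v ∈ S)
    (hadj : (pGraph n).Adj u v) (he : s(u, v) ∉ W) : v ∈ lowerTunnelSet S W := by
  obtain ⟨w, hw, h⟩ := hu
  exact ⟨w, hw, h.cons hadj.symm hv (by rwa [Sym2.eq_swap])⟩

theorem mem_lowerExits_iff {i0 : Fin n} {c : ℤ} {x : LV n} :
    x ∈ lowerExits n i0 S W c ↔ x.1 i0 = c ∧ x ∈ lowerTunnelSet S W :=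
  ⟨fun h => ⟨h.2.1, h.2.2⟩, fun h => ⟨mem_of_mem_lowerTunnelSet h.2, h⟩⟩

theorem notMem_lowerTunnelSet_of_isSetCutset {m : ℕ}
    (hW : IsSetCutset n S (faceAt n S 0) (faceAt n S m) W) {x : LV n} (hx : x ∈ S)
    (hxm : x.2 = m) : x ∉ lowerTunnelSet S W := fun ⟨w, hw, h⟩ =>
  isSetCutset_iff.mp hW w hw x ⟨hx, hxm⟩ h.symm

end LowerTunnels

section Shift

variable (i0 : Fin n)

@[simp]
theorem shiftOne_fst_self (p : LV n) : (shiftOne n i0 p).1 i0 = p.1 i0 + 1 := by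
  simp [shiftOne]

theorem shiftOne_injective : Function.Injective (shiftOne n i0) := by
  intro p q h
  simp only [shiftOne, Prod.mk.injEq, funext_iff] at h
  refine Prod.ext (funext fun i => ?_) h.2
  have := h.1 i
  split_ifs at this <;> omega

theorem pGraph_adj_eq_shiftOne {p q : LV n} (h : (pGraph n).Adj p q)
    (hlt : p.1 i0 < q.1 i0) : q = shiftOne n i0 p := by
  have hsum : (p.1 i0 - q.1 i0).natAbs + ∑ i ∈ Finset.univ.erase i0, (p.1 i - q.1 i).natAbs
      + (p.2 - q.2).natAbs = 1 := by
    rw [Finset.add_sum_erase _ (fun i => (p.1 i - q.1 i).natAbs) (Finset.mem_univ i0)]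
    exact h
  have hpos : 0 < (p.1 i0 - q.1 i0).natAbs := Int.natAbs_pos.mpr (by omega)
  have hrest := Finset.sum_eq_zero_iff.mp (show ∑ i ∈ Finset.univ.erase i0,
    (p.1 i - q.1 i).natAbs = 0 by omega)
  refine Prod.ext (funext fun i => ?_) (by simp [shiftOne]; omega)
  by_cases hi : i = i0
  · subst hi; simp only [shiftOne_fst_self]; omega
  · have := hrest i (Finset.mem_erase.mpr ⟨hi, Finset.mem_univ i⟩)
    simp [shiftOne, hi]; omega

end Shift

section Boxes

variable {i0 : Fin n} {k : Fin n → ℕ} {m : ℕ}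

theorem mem_latBoxUnion_iff {x : LV n} :
    x ∈ latBoxUnion n i0 k m ↔ x ∈ latBox n k m ∨ x ∈ latBox' n i0 k m := by
  constructor
  · rintro ⟨⟨h0, h1⟩, hrest, hz⟩
    by_cases hx : x.1 i0 ≤ k i0
    · refine Or.inl ⟨fun i => ?_, hz⟩
      by_cases hi : i = i0
      · subst hi; exact ⟨h0, hx⟩
      · exact hrest i hi
    · exact Or.inr ⟨⟨by omega, h1⟩, hrest, hz⟩
  · rintro (⟨hbox, hz⟩ | ⟨⟨h0, h1⟩, hrest, hz⟩)
    · exact ⟨⟨(hbox i0).1, by linarith [(hbox i0).2]⟩, fun i _ => hbox i, hz⟩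
    · exact ⟨⟨by omega, h1⟩, hrest, hz⟩

theorem eq_shiftOne_of_adj_latBox_latBox' {u v : LV n} (hu : u ∈ latBox n k m)
    (hv : v ∈ latBox' n i0 k m) (hadj : (pGraph n).Adj u v) :
    u.1 i0 = k i0 ∧ v = shiftOne n i0 u := by
  have hv_eq := pGraph_adj_eq_shiftOne i0 hadj (by linarith [(hu.1 i0).2, hv.1.1])
  refine ⟨?_, hv_eq⟩
  have := congrArg (fun p : LV n => p.1 i0) hv_eq
  simp only [shiftOne_fst_self] at this
  linarith [(hu.1 i0).2, hv.1.1]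

end Boxes

variable {S S' : Set (LV n)} {W W' : Set (Sym2 (LV n))} {i0 : Fin n} {c : ℤ}

theorem mem_lowerTunnelSet_iff_shiftOne
    (hlower : shiftOne n i0 '' lowerExits n i0 S W c = lowerExits n i0 S' W' (c + 1))
    {x : LV n} (hx : x.1 i0 = c) :
    x ∈ lowerTunnelSet S W ↔ shiftOne n i0 x ∈ lowerTunnelSet S' W' := by
  have := congrArg (shiftOne n i0 x ∈ ·) hlower
  simpa [(shiftOne_injective i0).mem_set_image, mem_lowerExits_iff, hx] using this

theorem stepClosed_lowerTunnelSet_union {k : Fin n → ℕ} {m : ℕ}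
    (hlower : shiftOne n i0 '' lowerExits n i0 (latBox n k m) W (k i0)
      = lowerExits n i0 (latBox' n i0 k m) W' (k i0 + 1)) :
    StepClosed (pGraph n) (latBoxUnion n i0 k m) (W ∪ W')
      (lowerTunnelSet (latBox n k m) W ∪ lowerTunnelSet (latBox' n i0 k m) W') := by
  intro u v _ hv hadj he hu
  rw [Set.mem_union, not_or] at he
  rw [mem_latBoxUnion_iff] at hv
  rcases hu with hu | hu <;> rcases hv with hv | hv
  · exact Or.inl (lowerTunnelSet_step hu hv hadj he.1)
  · obtain ⟨hu_face, rfl⟩ :=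
      eq_shiftOne_of_adj_latBox_latBox' (mem_of_mem_lowerTunnelSet hu) hv hadj
    exact Or.inr ((mem_lowerTunnelSet_iff_shiftOne hlower hu_face).mp hu)
  · obtain ⟨hv_face, rfl⟩ :=
      eq_shiftOne_of_adj_latBox_latBox' hv (mem_of_mem_lowerTunnelSet hu) hadj.symm
    exact Or.inl ((mem_lowerTunnelSet_iff_shiftOne hlower hv_face).mpr hu)
  · exact Or.inr (lowerTunnelSet_step hu hv hadj he.2)

end Lattice

theorem patching_cutsets_general (n : ℕ) (hn : 0 < n) (k : Fin n → ℕ) (m : ℕ)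
    (W W' : Set (Sym2 (LV n)))
    (hW : IsSetCutset n (latBox n k m)
      (faceAt n (latBox n k m) 0) (faceAt n (latBox n k m) (m : ℤ)) W)
    (hW' : IsSetCutset n (latBox' n ⟨0, hn⟩ k m)
      (faceAt n (latBox' n ⟨0, hn⟩ k m) 0) (faceAt n (latBox' n ⟨0, hn⟩ k m) (m : ℤ)) W')
    (hlower : shiftOne n ⟨0, hn⟩ '' lowerExits n ⟨0, hn⟩ (latBox n k m) W (k ⟨0, hn⟩ : ℤ)
      = lowerExits n ⟨0, hn⟩ (latBox' n ⟨0, hn⟩ k m) W' ((k ⟨0, hn⟩ : ℤ) + 1)) :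
    IsSetCutset n (latBoxUnion n ⟨0, hn⟩ k m)
      (faceAt n (latBoxUnion n ⟨0, hn⟩ k m) 0)
      (faceAt n (latBoxUnion n ⟨0, hn⟩ k m) (m : ℤ)) (W ∪ W') := by
  refine isSetCutset_iff.mpr fun u ⟨hu, hu0⟩ v ⟨_, hvm⟩ huv => ?_
  have hu_low :
      u ∈ lowerTunnelSet (latBox n k m) W ∪ lowerTunnelSet (latBox' n ⟨0, hn⟩ k m) W' := by
    rcases mem_latBoxUnion_iff.mp hu with hu | hu
    · exact Or.inl (mem_lowerTunnelSet_of_mem_faceAt ⟨hu, hu0⟩)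
    · exact Or.inr (mem_lowerTunnelSet_of_mem_faceAt ⟨hu, hu0⟩)
  rcases huv.mem_of_stepClosed (stepClosed_lowerTunnelSet_union hlower) hu_low
    with hv_low | hv_low
  · exact notMem_lowerTunnelSet_of_isSetCutset hW (mem_of_mem_lowerTunnelSet hv_low) hvm hv_low
  · exact notMem_lowerTunnelSet_of_isSetCutset hW' (mem_of_mem_lowerTunnelSet hv_low) hvm hv_low

/-- patching cutsets, Lemma 16: let `W` and `W'` be `F_0`–`F_m`
cutsets of the adjacent boxes `B = [0,k_1] × ∏ [0,k_i] × [0,m]` and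
`B' = [k_1+1, 2k_1+1] × ∏ [0,k_i] × [0,m]`.  If the exits of the upper tunnels of
`W` on `{x_1 = k_1}` correspond exactly, under the shift by one unit in the first
coordinate, to the exits of the upper tunnels of `W'` on `{x_1 = k_1 + 1}`, and
likewise for the exits of the lower tunnels, then `W ∪ W'` is a cutset separating
the bottom face from the top face of the union box `B ∪ B'`. -/
theorem patching_cutsets (n : ℕ) (hn : 0 < n) (k : Fin n → ℕ) (m : ℕ)
    (W W' : Set (Sym2 (LV n)))
    (hW : IsSetCutset n (latBox n k m)
      (faceAt n (latBox n k m) 0) (faceAt n (latBox n k m) (m : ℤ)) W)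
    (hW' : IsSetCutset n (latBox' n ⟨0, hn⟩ k m)
      (faceAt n (latBox' n ⟨0, hn⟩ k m) 0) (faceAt n (latBox' n ⟨0, hn⟩ k m) (m : ℤ)) W')
    (hupper : shiftOne n ⟨0, hn⟩ '' upperExits n ⟨0, hn⟩ (latBox n k m) m W (k ⟨0, hn⟩ : ℤ)
      = upperExits n ⟨0, hn⟩ (latBox' n ⟨0, hn⟩ k m) m W' ((k ⟨0, hn⟩ : ℤ) + 1))
    (hlower : shiftOne n ⟨0, hn⟩ '' lowerExits n ⟨0, hn⟩ (latBox n k m) W (k ⟨0, hn⟩ : ℤ)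
      = lowerExits n ⟨0, hn⟩ (latBox' n ⟨0, hn⟩ k m) W' ((k ⟨0, hn⟩ : ℤ) + 1)) :
    IsSetCutset n (latBoxUnion n ⟨0, hn⟩ k m)
      (faceAt n (latBoxUnion n ⟨0, hn⟩ k m) 0)
      (faceAt n (latBoxUnion n ⟨0, hn⟩ k m) (m : ℤ)) (W ∪ W') :=
  patching_cutsets_general n hn k m W W' hW hW' hlower
end
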